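/- The lattice E7 ⊕ A2 embeds in the lattice H ⊕ E8; that is, there exists a 10 × 9 integer matrix M such that Mᵀ · G(H ⊕ E8) · M equals the Gram matrix of E7 ⊕ A2. -/
import Mathlib


open Matrix

/-- Gram matrix of the ambient lattice (10 × 10). -/
def ambientGram : Matrix (Fin 10) (Fin 10) ℤ :=
  !![0, 1, 0, 0, 0, 0, 0, 0, 0, 0;
      1, 0, 0, 0, 0, 0, 0, 0, 0, 0;
      0, 0, -2, 1, 0, 0, 0, 0, 0, 0;
      0, 0, 1, -2, 1, 0, 0, 0, 0, 0;
      0, 0, 0, 1, -2, 1, 0, 0, 0, 1;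
      0, 0, 0, 0, 1, -2, 1, 0, 0, 0;
      0, 0, 0, 0, 0, 1, -2, 1, 0, 0;
      0, 0, 0, 0, 0, 0, 1, -2, 1, 0;
      0, 0, 0, 0, 0, 0, 0, 1, -2, 0;
      0, 0, 0, 0, 1, 0, 0, 0, 0, -2]

/-- Gram matrix of the root lattice to be embedded (9 × 9). -/
def rootGram : Matrix (Fin 9) (Fin 9) ℤ :=
  !![-2, 1, 0, 0, 0, 0, 0, 0, 0;
      1, -2, 1, 0, 0, 0, 0, 0, 0;
      0, 1, -2, 1, 0, 0, 1, 0, 0;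
      0, 0, 1, -2, 1, 0, 0, 0, 0;
      0, 0, 0, 1, -2, 1, 0, 0, 0;
      0, 0, 0, 0, 1, -2, 0, 0, 0;
      0, 0, 1, 0, 0, 0, -2, 0, 0;
      0, 0, 0, 0, 0, 0, 0, -2, 1;
      0, 0, 0, 0, 0, 0, 0, 1, -2]

theorem stmt_16 :
    ∃ M : Matrix (Fin 10) (Fin 9) ℤ,
      Mᵀ * ambientGram * M = rootGram := by
  use !![-2, -2, 0, 2, 0, 1, 0, 0, 0;
      -2, -2, 0, 2, 1, -1, 0, 0, 0;
      -2, -2, 0, 1, 1, 0, 0, 0, 0;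
      -2, -2, 0, 1, 0, 0, 0, 0, 0;
      -2, -1, 0, -1, 0, 0, 1, 0, 0;
      -1, 1, 0, -2, 0, 0, 0, 0, 0;
      -3, 0, 0, 0, 0, 0, 0, 0, 0;
      -2, 0, 0, 0, 0, 0, 0, 1, 0;
      -1, 0, 0, 0, 0, 0, 0, 0, 1;
      -1, -1, 1, -1, 0, 0, 0, 0, 0]
  decide
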